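/- For every forest F on n ≥ 3 vertices, there exists a set S of vertices, all of the same degree in F, such that the induced subgraph on S has maximum degree at most 1 and |S| ≥ 2(n+2)/9. -/

import Mathlib

/-!
Write `n_d` for the number of vertices of degree `d`. If `F` has an edge, its non-isolated vertices
span a forest, so the degree sum is at most `2 (n - n_0) - 2`; this gives
`n + 2 ≤ n_0 + 2 n_1 + n_2`. Inside the degree-2 vertices, repeatedly take a vertex `u` with at
most one neighbour `w` left, keep `u` and `w` and discard the remaining neighbour of `w`: this
yields a 1-independent set `T` with `3 |T| ≥ 2 n_2`. Hence `2 n + 4 ≤ 2 n_0 + 4 n_1 + 3 |T|`, and one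
of the three degree-constant 1-independent sets (degree 0, degree 1, `T`) has at least
`(2 n + 4) / 9` elements. Without edges all `n ≥ 3` vertices are isolated.
-/

open Finset SimpleGraph

namespace SimpleGraph

variable {V : Type*} {G : SimpleGraph V}

theorem IsAcyclic.card_edgeFinset_add_one_le [Fintype V] [Nonempty V] [Fintype G.edgeSet]
    (hG : G.IsAcyclic) : #G.edgeFinset + 1 ≤ Fintype.card V := by
  classical
  obtain ⟨T, hGT, -, hT⟩ := connected_top.exists_isTree_le_of_le_of_isAcyclic le_top hG
  calc #G.edgeFinset + 1 ≤ #T.edgeFinset + 1 := by gcongr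
    _ = Fintype.card V := hT.card_edgeFinset

theorem IsAcyclic.card_edgeFinset_add_one_le_card_support [Fintype V] [DecidableRel G.Adj]
    (hG : G.IsAcyclic) (hE : ∃ v, G.degree v ≠ 0) :
    #G.edgeFinset + 1 ≤ #{v | G.degree v ≠ 0} := by
  classical
  obtain ⟨v, hv⟩ := hE
  have : Nonempty G.support := ⟨⟨v, (G.degree_pos_iff_mem_support v).1 (Nat.pos_of_ne_zero hv)⟩⟩
  have h := (hG.induce G.support).card_edgeFinset_add_one_le
  rw [card_edgeFinset_induce_support, Fintype.card_subtype] at h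
  simpa only [Ne, degree_eq_zero_iff_notMem_support, not_not] using h

theorem IsAcyclic.exists_degree_le_one [Fintype V] [Nonempty V] [DecidableRel G.Adj]
    (hG : G.IsAcyclic) : ∃ v, G.degree v ≤ 1 := by
  classical
  have hE := hG.card_edgeFinset_add_one_le
  have hsum := G.sum_degrees_eq_twice_card_edges
  obtain ⟨v, -, hv⟩ := exists_lt_of_sum_lt (s := univ) (f := fun v ↦ G.degree v)
    (g := fun _ ↦ 2) (by rw [hsum, sum_const, card_univ, smul_eq_mul]; omega)
  exact ⟨v, Nat.le_of_lt_succ hv⟩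

theorem IsAcyclic.card_add_two_le_of_exists_degree_ne_zero [Fintype V] [DecidableRel G.Adj]
    (hG : G.IsAcyclic) (hE : ∃ v, G.degree v ≠ 0) :
    Fintype.card V + 2 ≤
      #{v | G.degree v = 0} + 2 * #{v | G.degree v = 1} + #{v | G.degree v = 2} := by
  have hsupp := hG.card_edgeFinset_add_one_le_card_support hE
  have hsum := G.sum_degrees_eq_twice_card_edges
  have hpt : ∑ v, (1 + 2 * if G.degree v ≠ 0 then 1 else 0) ≤
      ∑ v, (G.degree v + (if G.degree v = 0 then 1 else 0) +
        2 * (if G.degree v = 1 then 1 else 0) + if G.degree v = 2 then 1 else 0) :=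
    sum_le_sum fun v _ ↦ by split_ifs <;> omega
  simp only [sum_add_distrib, ← mul_sum, ← card_filter, sum_const, card_univ, smul_eq_mul,
    mul_one] at hpt
  omega

variable [DecidableRel G.Adj]

theorem degree_induce_eq_card_filter [DecidableEq V] (s : Finset V) (v : (s : Set V)) :
    (G.induce s).degree v = #(s.filter (G.Adj v)) := by
  rw [← card_neighborFinset_eq_degree, ← card_map (Function.Embedding.subtype _)]
  congr 1
  ext
  simp [and_comm]

theorem IsAcyclic.exists_mem_card_filter_adj_le_one [DecidableEq V] (hG : G.IsAcyclic)
    {s : Finset V} (hs : s.Nonempty) : ∃ v ∈ s, #(s.filter (G.Adj v)) ≤ 1 := by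
  have : Nonempty (s : Set V) := hs.to_set.to_subtype
  obtain ⟨v, hv⟩ := (hG.induce (s : Set V)).exists_degree_le_one
  exact ⟨v, v.2, by rwa [degree_induce_eq_card_filter] at hv⟩

theorem card_filter_adj_le_degree [Fintype V] (s : Finset V) (v : V) :
    #(s.filter (G.Adj v)) ≤ G.degree v := by
  rw [← card_neighborFinset_eq_degree]
  exact card_le_card fun x hx ↦ (mem_neighborFinset G v x).2 (mem_filter.1 hx).2

def IsOneIndependent (G : SimpleGraph V) [DecidableRel G.Adj] (s : Finset V) : Prop :=
  ∀ v ∈ s, #(s.filter (G.Adj v)) ≤ 1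

theorem isOneIndependent_of_degree_le_one [Fintype V] {s : Finset V}
    (hs : ∀ v ∈ s, G.degree v ≤ 1) : G.IsOneIndependent s := fun v hv ↦
  (card_filter_adj_le_degree s v).trans (hs v hv)

variable [DecidableEq V]

theorem isOneIndependent_of_card_le_two {s : Finset V} (hs : #s ≤ 2) : G.IsOneIndependent s := by
  intro v hv
  have : s.filter (G.Adj v) ⊆ s.erase v := fun x hx ↦
    mem_erase.2 ⟨(G.ne_of_adj (mem_filter.1 hx).2).symm, (mem_filter.1 hx).1⟩
  have := card_le_card this
  rw [card_erase_of_mem hv] at this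
  omega

theorem IsOneIndependent.union {s t : Finset V} (hs : G.IsOneIndependent s)
    (ht : G.IsOneIndependent t) (hst : ∀ x ∈ s, ∀ y ∈ t, ¬G.Adj x y) :
    G.IsOneIndependent (s ∪ t) := by
  intro v hv
  rw [filter_union]
  rcases mem_union.1 hv with hv | hv
  · rw [filter_false_of_mem fun y hy ↦ hst v hv y hy, union_empty]
    exact hs v hv
  · rw [filter_false_of_mem fun y hy h ↦ hst y hy v hv h.symm, empty_union]
    exact ht v hv

/-- One greedy step: `p` is kept, all of `r` is discarded. -/
theorem IsAcyclic.exists_isOneIndependent_piece (hG : G.IsAcyclic) {s : Finset V}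
    (hs : s.Nonempty) (hdeg : ∀ v ∈ s, #(s.filter (G.Adj v)) ≤ 2) :
    ∃ p r : Finset V, p ⊆ r ∧ r ⊆ s ∧ r.Nonempty ∧ G.IsOneIndependent p ∧
      (∀ x ∈ p, ∀ y ∈ s \ r, ¬G.Adj x y) ∧ 2 * #r ≤ 3 * #p := by
  obtain ⟨u, hu, hlow⟩ := hG.exists_mem_card_filter_adj_le_one hs
  rcases Nat.le_one_iff_eq_zero_or_eq_one.1 hlow with h0 | h1
  · refine ⟨{u}, {u}, subset_rfl, singleton_subset_iff.2 hu, singleton_nonempty u,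
      isOneIndependent_of_card_le_two (by simp), ?_, by simp⟩
    rintro x hx y hy hxy
    rw [mem_singleton.1 hx] at hxy
    exact notMem_empty y (card_eq_zero.1 h0 ▸ mem_filter.2 ⟨(mem_sdiff.1 hy).1, hxy⟩)
  · obtain ⟨w, hw⟩ := card_eq_one.1 h1
    have hw' : w ∈ s ∧ G.Adj u w := mem_filter.1 (hw ▸ mem_singleton_self w)
    have huw : ∀ y ∈ s, G.Adj u y → y = w := fun y hy h ↦
      mem_singleton.1 (hw ▸ mem_filter.2 ⟨hy, h⟩)
    refine ⟨{u, w}, insert w (s.filter (G.Adj w)), ?_, insert_subset hw'.1 (filter_subset _ _),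
      insert_nonempty _ _, isOneIndependent_of_card_le_two card_le_two, ?_, ?_⟩
    · exact insert_subset (mem_insert_of_mem (mem_filter.2 ⟨hu, hw'.2.symm⟩))
        (singleton_subset_iff.2 (mem_insert_self _ _))
    · rintro x hx y hy hxy
      obtain ⟨hys, hyr⟩ := mem_sdiff.1 hy
      rcases mem_insert.1 hx with rfl | hx
      · exact hyr (huw y hys hxy ▸ mem_insert_self _ _)
      · exact hyr (mem_insert_of_mem (mem_filter.2 ⟨hys, mem_singleton.1 hx ▸ hxy⟩))
    · rw [card_pair (G.ne_of_adj hw'.2)]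
      have := (card_insert_le w (s.filter (G.Adj w))).trans (Nat.succ_le_succ (hdeg w hw'.1))
      omega

theorem IsAcyclic.exists_isOneIndependent_subset (hG : G.IsAcyclic) (s : Finset V)
    (hdeg : ∀ v ∈ s, #(s.filter (G.Adj v)) ≤ 2) :
    ∃ t ⊆ s, G.IsOneIndependent t ∧ 2 * #s ≤ 3 * #t := by
  induction s using strongInduction with
  | H s ih =>
  rcases s.eq_empty_or_nonempty with rfl | hs
  · exact ⟨∅, subset_rfl, fun v hv ↦ absurd hv (notMem_empty v), by simp⟩
  obtain ⟨p, r, hpr, hrs, hr, hp, hp_adj, hcard⟩ := hG.exists_isOneIndependent_piece hs hdeg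
  obtain ⟨t, hts, ht, htcard⟩ := ih (s \ r) (sdiff_ssubset hrs hr) fun v hv ↦
    (card_le_card (filter_subset_filter _ sdiff_subset)).trans (hdeg v (mem_sdiff.1 hv).1)
  have hdisj : Disjoint p t :=
    disjoint_of_subset_left hpr (disjoint_of_subset_right hts sdiff_disjoint.symm)
  refine ⟨p ∪ t, union_subset (hpr.trans hrs) (hts.trans sdiff_subset),
    hp.union ht fun x hx y hy ↦ hp_adj x hx y (hts hy), ?_⟩
  rw [card_union_of_disjoint hdisj, ← card_sdiff_add_card_eq_card hrs]
  omega

end SimpleGraph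

/-- For every forest `F` on `n ≥ 3` vertices there is a set of vertices all of the same
degree, inducing a subgraph of maximum degree at most `1`, of size at least `2(n+2)/9`. -/
theorem reg1Indep_forest {V : Type*} [Fintype V] [DecidableEq V] (F : SimpleGraph V)
    [DecidableRel F.Adj] (hacyc : F.IsAcyclic) (hn : 3 ≤ Fintype.card V) :
    ∃ S : Finset V, (∃ d : ℕ, ∀ v ∈ S, F.degree v = d) ∧
      (∀ v ∈ S, (S.filter (F.Adj v)).card ≤ 1) ∧
      2 * ((Fintype.card V : ℝ) + 2) / 9 ≤ (S.card : ℝ) := by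
  set n := Fintype.card V
  obtain ⟨T, hT2, hT, hTcard⟩ := hacyc.exists_isOneIndependent_subset {v | F.degree v = 2}
    fun v hv ↦ (card_filter_adj_le_degree _ v).trans (mem_filter.1 hv).2.le
  have hlarge : 2 * n + 4 ≤ 9 * #{v | F.degree v = 0} ∨ 2 * n + 4 ≤ 9 * #{v | F.degree v = 1} ∨
      2 * n + 4 ≤ 9 * #T := by
    by_cases hE : ∀ v, F.degree v = 0
    · have : #{v | F.degree v = 0} = n := by simp [hE, n]
      omega
    · have := hacyc.card_add_two_le_of_exists_degree_ne_zero (not_forall.1 hE)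
      omega
  have hreal (m : ℕ) (hm : 2 * n + 4 ≤ 9 * m) : 2 * ((n : ℝ) + 2) / 9 ≤ m := by
    rw [div_le_iff₀ (by norm_num)]
    exact_mod_cast (by omega : 2 * (n + 2) ≤ m * 9)
  have hlevel (d : ℕ) (hd : d ≤ 1) : F.IsOneIndependent {v | F.degree v = d} :=
    isOneIndependent_of_degree_le_one fun v hv ↦ (mem_filter.1 hv).2 ▸ hd
  rcases hlarge with h | h | h
  · exact ⟨_, ⟨0, fun v hv ↦ (mem_filter.1 hv).2⟩, hlevel 0 zero_le_one, hreal _ h⟩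
  · exact ⟨_, ⟨1, fun v hv ↦ (mem_filter.1 hv).2⟩, hlevel 1 le_rfl, hreal _ h⟩
  · exact ⟨T, ⟨2, fun v hv ↦ (mem_filter.1 (hT2 hv)).2⟩, hT, hreal _ h⟩
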